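/- arXiv:math/9906049 — 3 statements merged into one kernel-verified Lean document; each statement's English description precedes it below -/
import Mathlib

section
/- Suppose 𝐞 = (e₁,e₂) is a nilpotent pair in 𝔤 and 𝐡 = (h₁,h₂) is a pair of semisimple elements satisfying [h₁,h₂] = 0 and [h_i,e_j] = δ_{ij} e_j for i,j ∈ {1,2}. If 𝔷_𝔤(𝐡) ∩ 𝔷_𝔤(𝐞) = 0, then 𝐡 is a characteristic of 𝐞 and 𝔷_𝔤(𝐞) contains no nonzero semisimple elements. -/
/-!
Common definitions for formalizing "Nilpotent pairs in semisimple Lie algebras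
and their characteristics" (D. Panyushev).
-/

open LieAlgebra Module Submodule

section Defs

variable (𝕜 : Type*) [Field 𝕜] [IsAlgClosed 𝕜] [CharZero 𝕜]
variable (L : Type*) [LieRing L] [LieAlgebra 𝕜 L]

/-- The centralizer `𝔷_𝔤(S)` of a set `S ⊆ 𝔤`, as a submodule. -/
def cent (S : Set L) : Submodule 𝕜 L where
  carrier := {x | ∀ s ∈ S, ⁅s, x⁆ = 0}
  add_mem' := fun {a b} ha hb s hs => by rw [lie_add, ha s hs, hb s hs, add_zero]
  zero_mem' := fun s _ => lie_zero s
  smul_mem' := fun c x hx s hs => by rw [lie_smul, hx s hs, smul_zero]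

/-- The (truncated) exponential of an endomorphism; for a nilpotent endomorphism of a
module of finite rank this is the usual exponential. -/
noncomputable def expEnd (f : Module.End 𝕜 L) : Module.End 𝕜 L :=
  ∑ i ∈ Finset.range (Module.finrank 𝕜 L + 1), (i.factorial : 𝕜)⁻¹ • f ^ i

/-- The adjoint group `G` of `𝔤`: the group of automorphisms generated by the
exponentials of nilpotent inner derivations. -/
noncomputable def adjointGroup : Subgroup (L ≃ₗ[𝕜] L) :=
  Subgroup.closure
    {φ | ∃ x : L, IsNilpotent (ad 𝕜 L x) ∧ (φ : L →ₗ[𝕜] L) = expEnd 𝕜 L (ad 𝕜 L x)}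

/-- A nilpotent pair: `[e₁,e₂] = 0` and the pair can be independently rescaled by the
adjoint group. -/
def IsNilpotentPair (e₁ e₂ : L) : Prop :=
  ⁅e₁, e₂⁆ = 0 ∧ ∀ t₁ t₂ : 𝕜, t₁ ≠ 0 → t₂ ≠ 0 →
    ∃ g ∈ adjointGroup 𝕜 L, g e₁ = t₁ • e₁ ∧ g e₂ = t₂ • e₂

/-- A characteristic of the pair `(e₁, e₂)`: a pair of semisimple elements `(h₁, h₂)`
with `[h₁,h₂] = 0`, `[hᵢ,eⱼ] = δᵢⱼ eⱼ`, and `h₁, h₂ ⊥ 𝔷_𝔤(𝐞)` w.r.t. the Killing form. -/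
def IsCharacteristic (e₁ e₂ h₁ h₂ : L) : Prop :=
  (ad 𝕜 L h₁).IsSemisimple ∧ (ad 𝕜 L h₂).IsSemisimple ∧
  ⁅h₁, h₂⁆ = 0 ∧
  ⁅h₁, e₁⁆ = e₁ ∧ ⁅h₂, e₂⁆ = e₂ ∧ ⁅h₁, e₂⁆ = 0 ∧ ⁅h₂, e₁⁆ = 0 ∧
  ∀ z ∈ cent 𝕜 L {e₁, e₂}, killingForm 𝕜 L z h₁ = 0 ∧ killingForm 𝕜 L z h₂ = 0

/-- The bi-graded component `𝔤_{p,q}` determined by the characteristic `(h₁, h₂)`. -/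
noncomputable def gpq (h₁ h₂ : L) (p q : ℚ) : Submodule 𝕜 L :=
  Module.End.eigenspace (ad 𝕜 L h₁) (p : 𝕜) ⊓ Module.End.eigenspace (ad 𝕜 L h₂) (q : 𝕜)

/-- The graded component `𝔤_p` determined by a semisimple element `h`. -/
noncomputable def gp (h : L) (p : ℚ) : Submodule 𝕜 L :=
  Module.End.eigenspace (ad 𝕜 L h) (p : 𝕜)

/-- `M(i,j) = {x ∈ M : (ad e₁)^{i+1} x = 0, (ad e₂)^{j+1} x = 0}`. -/
noncomputable def Mij (M : Submodule 𝕜 L) (e₁ e₂ : L) (i j : ℕ) : Submodule 𝕜 L :=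
  M ⊓ LinearMap.ker ((ad 𝕜 L e₁) ^ (i + 1)) ⊓ LinearMap.ker ((ad 𝕜 L e₂) ^ (j + 1))

/-- `lim_e M = Σ_{i ≥ 0} (ad e)^i M(i,*)`. -/
noncomputable def limE (e : L) (M : Submodule 𝕜 L) : Submodule 𝕜 L :=
  ⨆ i : ℕ, Submodule.map ((ad 𝕜 L e) ^ i) (M ⊓ LinearMap.ker ((ad 𝕜 L e) ^ (i + 1)))

/-- `lim_𝐞 M = Σ_{i,j ≥ 0} (ad e₁)^i (ad e₂)^j M(i,j)`. -/
noncomputable def limPair (e₁ e₂ : L) (M : Submodule 𝕜 L) : Submodule 𝕜 L :=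
  ⨆ i : ℕ, ⨆ j : ℕ,
    Submodule.map ((ad 𝕜 L e₁) ^ i * (ad 𝕜 L e₂) ^ j) (Mij 𝕜 L M e₁ e₂ i j)

/-- A nilpotent pair with characteristic `(h₁,h₂)` is wonderful if
`(ad e₁)^i (ad e₂)^j 𝔥(i,j) = 𝔷_𝔤(𝐞)_{i,j}` for all `i,j ≥ 0`, where `𝔥 = 𝔷_𝔤(𝐡)`. -/
noncomputable def IsWonderful (e₁ e₂ h₁ h₂ : L) : Prop :=
  ∀ i j : ℕ,
    Submodule.map ((ad 𝕜 L e₁) ^ i * (ad 𝕜 L e₂) ^ j)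
      (Mij 𝕜 L (cent 𝕜 L {h₁, h₂}) e₁ e₂ i j)
    = cent 𝕜 L {e₁, e₂} ⊓ gpq 𝕜 L h₁ h₂ i j

/-- The pair is integral if all eigenvalues of the characteristic are integers. -/
noncomputable def IsIntegralPair (h₁ h₂ : L) : Prop :=
  ∀ p q : ℚ, gpq 𝕜 L h₁ h₂ p q ≠ ⊥ → (∃ a : ℤ, p = a) ∧ (∃ b : ℤ, q = b)

end Defs

/-!
Write `Z = 𝔷_𝔤(𝐞)`. The commuting semisimple operators `ad h₁`, `ad h₂` preserve `Z` and, since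
`𝔷_𝔤(𝐡) ∩ Z = 0`, have no common zero eigenvector in it, so `Z = [h₁, Z] + [h₂, Z]`. Invariance
of the Killing form turns this into `κ(Z, s) = 0` for every `s` with `[s, Z] ⊆ Z`, first for
`s = hᵢ` (as `[hᵢ, hⱼ] = 0`) and then in general, since `κ([hᵢ, w], s) = κ(hᵢ, [w, s])`.

For semisimple `x ∈ Z` and a `ℚ`-linear `φ : 𝕜 → ℚ`, the endomorphism acting by `φ(c)` on the
`c`-eigenspace of `ad x` is a derivation, hence equals `ad s` for some `s`, and `s` normalises `Z`.
Thus `0 = κ(x, s) = ∑ c φ(c)` over the eigenvalues of `ad x` with multiplicity; applying `φ` gives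
`∑ φ(c)² = 0`. So every `φ` kills every eigenvalue, `ad x = 0`, and `x` is central, i.e. zero.
-/

namespace Module.End

open Polynomial

variable {K V : Type*} [Field K] [AddCommGroup V] [Module K V] [FiniteDimensional K V]

theorem exists_apply_eq_smul_of_mem_eigenspace (f : End K V) (ψ : K → K) :
    ∃ g : End K V, ∀ μ, ∀ v ∈ f.eigenspace μ, g v = ψ μ • v := by
  obtain ⟨q, hq⟩ := (exists_eval_eq_iff (fun μ : f.Eigenvalues ↦ (μ : K)) (ψ ·)).mpr
    fun μ ν h ↦ by rw [h]
  refine ⟨aeval f q, fun μ v hv ↦ ?_⟩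
  rcases eq_or_ne v 0 with rfl | hv₀
  · simp
  · have hμ : f.HasEigenvalue μ := hasEigenvalue_of_hasEigenvector ⟨hv, hv₀⟩
    rw [aeval_apply_of_hasEigenvector ⟨hv, hv₀⟩]
    exact congrArg (· • v) (hq ⟨μ, hμ⟩)

variable [IsAlgClosed K] {f : End K V}

theorem IsSemisimple.eq_iSup_inf_eigenspace (hf : f.IsSemisimple) {p : Submodule K V}
    (hp : ∀ x ∈ p, f x ∈ p) : p = ⨆ μ, p ⊓ f.eigenspace μ :=
  Submodule.eq_iSup_inf_genEigenspace 1 hp hf.iSup_eigenspace_eq_top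

theorem IsSemisimple.le_map_sup_inf_ker (hf : f.IsSemisimple) {p : Submodule K V}
    (hp : ∀ x ∈ p, f x ∈ p) : p ≤ p.map f ⊔ (p ⊓ LinearMap.ker f) := by
  refine (hf.eq_iSup_inf_eigenspace hp).le.trans (iSup_le fun μ ↦ ?_)
  rcases eq_or_ne μ 0 with rfl | hμ
  · rw [eigenspace_zero]
    exact le_sup_right
  · rintro v ⟨hvp, hv⟩
    refine Submodule.mem_sup_left ⟨μ⁻¹ • v, p.smul_mem _ hvp, ?_⟩
    rw [map_smul, mem_eigenspace_iff.mp hv, smul_smul, inv_mul_cancel₀ hμ, one_smul]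

theorem IsSemisimple.eq_zero_of_forall_exists_trace_mul_eq_zero [CharZero K]
    (hf : f.IsSemisimple)
    (h : ∀ φ : K →ₗ[ℚ] ℚ, ∃ g : End K V,
      (∀ μ, ∀ v ∈ f.eigenspace μ, g v = (φ μ : K) • v) ∧ LinearMap.trace K V (f * g) = 0) :
    f = 0 := by
  classical
  let I := (μ : K) × Fin (finrank K (f.eigenspace μ))
  let b : Basis I K V := (DirectSum.isInternal_submodule_of_iSupIndep_of_iSup_eq_top
    f.eigenspaces_iSupIndep hf.iSup_eigenspace_eq_top).collectedBasis
      fun μ ↦ finBasis K (f.eigenspace μ)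
  have : Fintype I := FiniteDimensional.fintypeBasisIndex b
  have hb (i : I) : f (b i) = i.1 • b i :=
    mem_eigenspace_iff.mp (DirectSum.IsInternal.collectedBasis_mem _ _ i)
  suffices ∀ (φ : K →ₗ[ℚ] ℚ) (i : I), φ i.1 = 0 from b.ext fun i ↦ by
    rw [hb, (Module.forall_dual_apply_eq_zero_iff ℚ i.1).mp (this · i), zero_smul,
      LinearMap.zero_apply]
  intro φ
  obtain ⟨g, hg, hfg⟩ := h φ
  have htrace : LinearMap.trace K V (f * g) = ∑ i : I, (φ i.1 : ℚ) • i.1 := by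
    rw [LinearMap.trace_eq_matrix_trace K b, Matrix.trace]
    refine Finset.sum_congr rfl fun i _ ↦ ?_
    rw [Matrix.diag_apply, LinearMap.toMatrix_apply, Module.End.mul_apply,
      hg _ _ (DirectSum.IsInternal.collectedBasis_mem _ _ i), map_smul, hb, smul_smul]
    simp [Rat.smul_def, mul_comm]
  have hsq : ∑ i : I, φ i.1 ^ 2 = 0 := by
    simpa [htrace, map_sum, map_smul, sq] using congr_arg φ hfg
  intro i
  exact pow_eq_zero_iff two_ne_zero |>.mp <|
    (Finset.sum_eq_zero_iff_of_nonneg fun _ _ ↦ sq_nonneg _).mp hsq i (Finset.mem_univ i)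

end Module.End

section LieAlgebra

variable {𝕜 L : Type*} [Field 𝕜] [LieRing L] [LieAlgebra 𝕜 L]

lemma mem_cent {S : Set L} {x : L} : x ∈ cent 𝕜 L S ↔ ∀ s ∈ S, ⁅s, x⁆ = 0 := Iff.rfl

lemma cent_pair (a b : L) :
    cent 𝕜 L {a, b} = LinearMap.ker (ad 𝕜 L a) ⊓ LinearMap.ker (ad 𝕜 L b) := by
  ext x
  simp [mem_cent]

lemma lie_mem_cent {S : Set L} {u z : L} (hu : ∀ s ∈ S, ⁅u, s⁆ ∈ span 𝕜 S)
    (hz : z ∈ cent 𝕜 L S) : ⁅u, z⁆ ∈ cent 𝕜 L S := by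
  have hspan : span 𝕜 S ≤ LinearMap.ker (ad 𝕜 L z) :=
    span_le.mpr fun s hs ↦ by
      rw [SetLike.mem_coe, LinearMap.mem_ker, ad_apply, ← lie_skew, hz s hs, neg_zero]
  intro s hs
  have hus : ⁅z, ⁅u, s⁆⁆ = 0 := hspan (hu s hs)
  rw [leibniz_lie, hz s hs, lie_zero, add_zero, ← lie_skew s u, neg_lie, ← lie_skew _ z, hus,
    neg_zero, neg_zero]

variable {h₁ h₂ : L} {Z : Submodule 𝕜 L}

lemma le_map_ad_sup_map_ad [IsAlgClosed 𝕜] [Module.Finite 𝕜 L]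
    (hss₁ : (ad 𝕜 L h₁).IsSemisimple) (hss₂ : (ad 𝕜 L h₂).IsSemisimple) (hcomm : ⁅h₁, h₂⁆ = 0)
    (hZ₁ : ∀ z ∈ Z, ⁅h₁, z⁆ ∈ Z) (hZ₂ : ∀ z ∈ Z, ⁅h₂, z⁆ ∈ Z)
    (hmeet : cent 𝕜 L {h₁, h₂} ⊓ Z = ⊥) :
    Z ≤ Z.map (ad 𝕜 L h₁) ⊔ Z.map (ad 𝕜 L h₂) := by
  set Z' := Z ⊓ LinearMap.ker (ad 𝕜 L h₁)
  have hZ' : ∀ z ∈ Z', ⁅h₂, z⁆ ∈ Z' := by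
    intro z hz
    obtain ⟨hz, hz₁⟩ := mem_inf.mp hz
    rw [LinearMap.mem_ker, ad_apply] at hz₁
    refine mem_inf.mpr ⟨hZ₂ z hz, ?_⟩
    rw [LinearMap.mem_ker, ad_apply, leibniz_lie, hcomm, hz₁, zero_lie, lie_zero, add_zero]
  have hbot : Z' ⊓ LinearMap.ker (ad 𝕜 L h₂) = ⊥ := by
    rw [← hmeet, cent_pair, inf_comm _ Z]
    exact inf_assoc _ _ _
  calc Z ≤ Z.map (ad 𝕜 L h₁) ⊔ Z' := hss₁.le_map_sup_inf_ker hZ₁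
    _ ≤ Z.map (ad 𝕜 L h₁) ⊔ Z'.map (ad 𝕜 L h₂) := by
      gcongr
      simpa [hbot] using hss₂.le_map_sup_inf_ker hZ'
    _ ≤ Z.map (ad 𝕜 L h₁) ⊔ Z.map (ad 𝕜 L h₂) := by
      gcongr
      exact inf_le_left

lemma killingForm_eq_zero_of_le_map_ad_sup_map_ad {u : L}
    (hZ : Z ≤ Z.map (ad 𝕜 L h₁) ⊔ Z.map (ad 𝕜 L h₂))
    (hu : ∀ w ∈ Z, killingForm 𝕜 L h₁ ⁅w, u⁆ = 0 ∧ killingForm 𝕜 L h₂ ⁅w, u⁆ = 0)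
    {z : L} (hz : z ∈ Z) : killingForm 𝕜 L z u = 0 := by
  obtain ⟨_, ⟨w₁, hw₁, rfl⟩, _, ⟨w₂, hw₂, rfl⟩, rfl⟩ := mem_sup.mp (hZ hz)
  rw [map_add, LinearMap.add_apply, ad_apply, ad_apply, LieModule.traceForm_apply_lie_apply,
    LieModule.traceForm_apply_lie_apply, (hu w₁ hw₁).1, (hu w₂ hw₂).2, add_zero]

lemma killingForm_eq_zero_of_lie_eq_zero (hZ : Z ≤ Z.map (ad 𝕜 L h₁) ⊔ Z.map (ad 𝕜 L h₂))
    {h : L} (hh₁ : ⁅h, h₁⁆ = 0) (hh₂ : ⁅h, h₂⁆ = 0) {z : L} (hz : z ∈ Z) :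
    killingForm 𝕜 L z h = 0 :=
  killingForm_eq_zero_of_le_map_ad_sup_map_ad hZ (fun w _ ↦ by
    rw [LieModule.traceForm_comm _ _ _ h₁, LieModule.traceForm_comm _ _ _ h₂,
      LieModule.traceForm_apply_lie_apply, LieModule.traceForm_apply_lie_apply, hh₁, hh₂,
      map_zero, and_self]) hz

lemma killingForm_eq_zero_of_lie_mem (hZ : Z ≤ Z.map (ad 𝕜 L h₁) ⊔ Z.map (ad 𝕜 L h₂))
    (hcomm : ⁅h₁, h₂⁆ = 0) {s : L} (hs : ∀ w ∈ Z, ⁅s, w⁆ ∈ Z) {z : L} (hz : z ∈ Z) :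
    killingForm 𝕜 L z s = 0 := by
  have hh₁ : ∀ w ∈ Z, killingForm 𝕜 L w h₁ = 0 :=
    fun w ↦ killingForm_eq_zero_of_lie_eq_zero hZ (lie_self h₁) hcomm
  have hh₂ : ∀ w ∈ Z, killingForm 𝕜 L w h₂ = 0 :=
    fun w ↦ killingForm_eq_zero_of_lie_eq_zero hZ (by rw [← lie_skew, hcomm, neg_zero])
      (lie_self h₂)
  refine killingForm_eq_zero_of_le_map_ad_sup_map_ad hZ (fun w hw ↦ ?_) hz
  have hws : ⁅w, s⁆ ∈ Z := by
    rw [← lie_skew]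
    exact Z.neg_mem (hs w hw)
  rw [LieModule.traceForm_comm _ _ _ h₁, LieModule.traceForm_comm _ _ _ h₂]
  exact ⟨hh₁ _ hws, hh₂ _ hws⟩

lemma lie_mem_eigenspace_ad {x a b : L} {c d : 𝕜} (ha : a ∈ (ad 𝕜 L x).eigenspace c)
    (hb : b ∈ (ad 𝕜 L x).eigenspace d) :
    ⁅a, b⁆ ∈ (ad 𝕜 L x).eigenspace (c + d) := by
  rw [Module.End.mem_eigenspace_iff, ad_apply] at ha hb ⊢
  rw [leibniz_lie, ha, hb, smul_lie, lie_smul, add_smul]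

theorem exists_lie_eq_smul_of_mem_eigenspace [Module.Finite 𝕜 L] [IsKilling 𝕜 L] {x : L}
    (hx : ⨆ c, (ad 𝕜 L x).eigenspace c = ⊤) (ψ : 𝕜 →+ 𝕜) :
    ∃ s : L, ∀ c, ∀ v ∈ (ad 𝕜 L x).eigenspace c, ⁅s, v⁆ = ψ c • v := by
  obtain ⟨D, hD⟩ := (ad 𝕜 L x).exists_apply_eq_smul_of_mem_eigenspace ψ
  have hmem (a : L) : a ∈ ⨆ c, (ad 𝕜 L x).eigenspace c := hx ▸ mem_top
  have leibniz (a b : L) : D ⁅a, b⁆ = ⁅a, D b⁆ - ⁅b, D a⁆ := by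
    refine iSup_induction _ (motive := fun a ↦ ∀ b, D ⁅a, b⁆ = ⁅a, D b⁆ - ⁅b, D a⁆) (hmem a)
      (fun c a ha b ↦ ?_) (by simp) (fun a a' ha ha' b ↦ ?_) b
    · refine iSup_induction _ (motive := fun b ↦ D ⁅a, b⁆ = ⁅a, D b⁆ - ⁅b, D a⁆) (hmem b)
        (fun d b hb ↦ ?_) (by simp) (fun b b' hb hb' ↦ ?_)
      · rw [hD _ _ (lie_mem_eigenspace_ad ha hb), hD _ _ ha, hD _ _ hb, lie_smul, lie_smul,
          ← lie_skew b a, smul_neg, sub_neg_eq_add, map_add, add_smul, add_comm]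
      · simp only [lie_add, add_lie, map_add, hb, hb']
        abel
    · simp only [lie_add, add_lie, map_add, ha, ha']
      abel
  obtain ⟨s, hs⟩ := LieDerivation.IsKilling.exists_eq_ad ⟨D, leibniz⟩
  refine ⟨s, fun c v hv ↦ ?_⟩
  rw [← ad_apply (R := 𝕜), ← LieDerivation.coe_ad_apply_eq_ad_apply, hs]
  exact hD c v hv

theorem eq_zero_of_isSemisimple_of_mem [IsAlgClosed 𝕜] [CharZero 𝕜] [Module.Finite 𝕜 L]
    [IsSemisimple 𝕜 L] (hZ : Z ≤ Z.map (ad 𝕜 L h₁) ⊔ Z.map (ad 𝕜 L h₂)) (hcomm : ⁅h₁, h₂⁆ = 0)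
    (hZ_lie : ∀ x ∈ Z, ∀ z ∈ Z, ⁅x, z⁆ ∈ Z) {x : L} (hx : x ∈ Z)
    (hxss : (ad 𝕜 L x).IsSemisimple) : x = 0 := by
  suffices ad 𝕜 L x = 0 by
    have hx : x ∈ LieModule.ker 𝕜 L L :=
      (LieModule.mem_ker 𝕜 L L x).mpr (LinearMap.congr_fun this)
    rwa [self_module_ker_eq_center, center_eq_bot, LieSubmodule.mem_bot] at hx
  refine hxss.eq_zero_of_forall_exists_trace_mul_eq_zero fun φ ↦ ?_
  obtain ⟨s, hs⟩ := exists_lie_eq_smul_of_mem_eigenspace hxss.iSup_eigenspace_eq_top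
    ((Rat.castHom 𝕜).toAddMonoidHom.comp φ.toAddMonoidHom)
  have hsZ : Z ≤ Z.comap (ad 𝕜 L s) :=
    (hxss.eq_iSup_inf_eigenspace (hZ_lie x hx)).le.trans <| iSup_le fun c w ⟨hwZ, hw⟩ ↦ by
      simpa [hs c w hw] using Z.smul_mem _ hwZ
  refine ⟨ad 𝕜 L s, hs, ?_⟩
  rw [Module.End.mul_eq_comp, ← killingForm_apply_apply]
  exact killingForm_eq_zero_of_lie_mem hZ hcomm (fun w hw ↦ hsZ hw) hx

end LieAlgebra

section Statement1

variable (𝕜 : Type*) [Field 𝕜] [IsAlgClosed 𝕜] [CharZero 𝕜]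
variable (L : Type*) [LieRing L] [LieAlgebra 𝕜 L] [Module.Finite 𝕜 L]
  [LieAlgebra.IsSemisimple 𝕜 L]

theorem statement1 (e₁ e₂ h₁ h₂ : L)
    (hss₁ : (ad 𝕜 L h₁).IsSemisimple) (hss₂ : (ad 𝕜 L h₂).IsSemisimple)
    (hcomm : ⁅h₁, h₂⁆ = 0)
    (h11 : ⁅h₁, e₁⁆ = e₁) (h22 : ⁅h₂, e₂⁆ = e₂)
    (h12 : ⁅h₁, e₂⁆ = 0) (h21 : ⁅h₂, e₁⁆ = 0)
    (hmeet : cent 𝕜 L {h₁, h₂} ⊓ cent 𝕜 L {e₁, e₂} = ⊥) :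
    IsCharacteristic 𝕜 L e₁ e₂ h₁ h₂ ∧
    ∀ x ∈ cent 𝕜 L {e₁, e₂}, (ad 𝕜 L x).IsSemisimple → x = 0 := by
  set Z := cent 𝕜 L {e₁, e₂}
  have hZ₁ : ∀ z ∈ Z, ⁅h₁, z⁆ ∈ Z := fun z ↦ lie_mem_cent <| by
    rintro s (rfl | rfl) <;> simp [h11, h12, mem_span_of_mem]
  have hZ₂ : ∀ z ∈ Z, ⁅h₂, z⁆ ∈ Z := fun z ↦ lie_mem_cent <| by
    rintro s (rfl | rfl) <;> simp [h21, h22, mem_span_of_mem]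
  have hZ_lie : ∀ x ∈ Z, ∀ z ∈ Z, ⁅x, z⁆ ∈ Z := fun x hx z ↦ lie_mem_cent fun s hs ↦ by
    rw [← lie_skew, hx s hs, neg_zero]
    exact zero_mem _
  have hZ := le_map_ad_sup_map_ad hss₁ hss₂ hcomm hZ₁ hZ₂ hmeet
  have hh₂₁ : ⁅h₂, h₁⁆ = 0 := by rw [← lie_skew, hcomm, neg_zero]
  refine ⟨⟨hss₁, hss₂, hcomm, h11, h22, h12, h21, fun z hz ↦ ⟨?_, ?_⟩⟩,
    fun x hx ↦ eq_zero_of_isSemisimple_of_mem hZ hcomm hZ_lie hx⟩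
  · exact killingForm_eq_zero_of_lie_eq_zero hZ (lie_self h₁) hcomm hz
  · exact killingForm_eq_zero_of_lie_eq_zero hZ hh₂₁ (lie_self h₂) hz

end Statement1
end

section
/- Suppose 𝐞 = (e₁,e₂) is a wonderful nilpotent pair in 𝔤 with characteristic 𝐡 = (h₁,h₂). Then: (1) lim_{e₁} 𝔥 = 𝔷_𝔤(e₁,h₂)_ℙ and lim_{e₂} 𝔥 = 𝔷_𝔤(e₂,h₁)_ℙ; (2) lim_{e₁} 𝔷_𝔤(e₂,h₁,h₂) = 𝔷_𝔤(e₂,e₁,h₂)_ℙ and lim_{e₂} 𝔷_𝔤(e₁,h₁,h₂) = 𝔷_𝔤(e₁,e₂,h₁)_ℙ. Here subscript ℙ denotes the sum of the graded components with nonnegative eigenvalue (with respect to h₁ in the first equality of each item and h₂ in the second). -/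
/-!
Common definitions for formalizing "Nilpotent pairs in semisimple Lie algebras
and their characteristics" (D. Panyushev).
-/

open LieAlgebra Module Submodule

section GradedParts

variable (𝕜 : Type*) [Field 𝕜] [IsAlgClosed 𝕜] [CharZero 𝕜]
variable (L : Type*) [LieRing L] [LieAlgebra 𝕜 L]

/-- The subscript-`ℙ` part of a subspace `N`: the sum of its intersections with the
nonnegative integral eigenspaces of `ad h`. -/
noncomputable def posPart (h : L) (N : Submodule 𝕜 L) : Submodule 𝕜 L :=
  ⨆ i : ℕ, N ⊓ gp 𝕜 L h i

/-- The subscript-`ℤ` part of a subspace `N`: the sum of its intersections with the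
integral eigenspaces of `ad h`. -/
noncomputable def intPart (h : L) (N : Submodule 𝕜 L) : Submodule 𝕜 L :=
  ⨆ i : ℤ, N ⊓ gp 𝕜 L h i

end GradedParts

/-!
The inclusions `⊆` hold because `ad e₁` raises the `h₁`-weight by one and commutes with `e₂`
and `h₂`. Conversely, let `y ∈ 𝔷_𝔤(e₁,h₂)` have `h₁`-weight `i`, and let `m` be largest with
`(ad e₂)^m y ≠ 0` (it exists since `ad e₂` raises the `h₂`-weight). Then `(ad e₂)^m y` lies in
`𝔷_𝔤(𝐞)_{i,m}`, so wonderfulness writes it as `(ad e₁)^i (ad e₂)^m z` with `z ∈ 𝔥(i,m)`.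
Since `(ad e₁)^i z ∈ lim_{e₁} 𝔥`, replacing `y` by `y - (ad e₁)^i z` lowers `m`, and induction
concludes. Part (2) is the case `m = 0`, and the second equality of each part follows by
exchanging the roles of the two indices.
-/

section LieLemmas

variable {R L : Type*} [CommRing R] [LieRing L] [LieAlgebra R L]

lemma commute_ad_of_lie_eq_zero {x y : L} (h : ⁅x, y⁆ = 0) : Commute (ad R L x) (ad R L y) :=
  LinearMap.ext fun z ↦ by
    simp only [Module.End.mul_apply, ad_apply, leibniz_lie x y z, h, zero_lie, zero_add]

lemma lie_ad_pow_apply_of_lie_eq_zero {x y : L} (h : ⁅x, y⁆ = 0) (k : ℕ) (z : L) :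
    ⁅x, (ad R L y ^ k) z⁆ = (ad R L y ^ k) ⁅x, z⁆ :=
  LinearMap.congr_fun ((commute_ad_of_lie_eq_zero (R := R) h).pow_right k).eq z

lemma ad_pow_succ_apply (e x : L) (k : ℕ) : (ad R L e ^ (k + 1)) x = ⁅e, (ad R L e ^ k) x⁆ := by
  rw [pow_succ', Module.End.mul_apply, ad_apply]

lemma lie_ad_pow_apply_of_lie_eq_self {a e x : L} {μ : R} (hae : ⁅a, e⁆ = e)
    (hx : ⁅a, x⁆ = μ • x) (k : ℕ) :
    ⁅a, (ad R L e ^ k) x⁆ = (μ + k) • (ad R L e ^ k) x := by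
  induction k with
  | zero => simpa using hx
  | succ k ih =>
    rw [ad_pow_succ_apply, leibniz_lie, hae, ih, lie_smul]
    push_cast
    module

end LieLemmas

lemma exists_ad_pow_apply_eq_zero {𝕜 L : Type*} [Field 𝕜] [CharZero 𝕜] [LieRing L]
    [LieAlgebra 𝕜 L] [Module.Finite 𝕜 L] {b f y : L} {μ : 𝕜} (hbf : ⁅b, f⁆ = f)
    (hy : ⁅b, y⁆ = μ • y) : ∃ m : ℕ, (ad 𝕜 L f ^ m) y = 0 := by
  by_contra! h
  refine (ad 𝕜 L b).finite_hasEigenvalue.not_infinite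
    (Set.infinite_of_injective_forall_mem (f := fun m : ℕ ↦ μ + m) (fun m n hmn ↦ ?_) fun m ↦ ?_)
  · simpa using hmn
  · exact Module.End.hasEigenvalue_of_hasEigenvector
      ⟨Module.End.mem_eigenspace_iff.mpr (lie_ad_pow_apply_of_lie_eq_self hbf hy m), h m⟩

section Membership

variable {𝕜 L : Type*} [Field 𝕜] [LieRing L] [LieAlgebra 𝕜 L]

lemma mem_cent_pair {a b x : L} : x ∈ cent 𝕜 L {a, b} ↔ ⁅a, x⁆ = 0 ∧ ⁅b, x⁆ = 0 := by
  simp [cent]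

lemma mem_cent_triple {a b c x : L} :
    x ∈ cent 𝕜 L {a, b, c} ↔ ⁅a, x⁆ = 0 ∧ ⁅b, x⁆ = 0 ∧ ⁅c, x⁆ = 0 := by
  simp [cent]

lemma mem_gp_natCast {a x : L} {i : ℕ} : x ∈ gp 𝕜 L a i ↔ ⁅a, x⁆ = (i : 𝕜) • x := by
  simp [gp]

lemma mem_gpq_natCast {a b x : L} {i j : ℕ} :
    x ∈ gpq 𝕜 L a b i j ↔ ⁅a, x⁆ = (i : 𝕜) • x ∧ ⁅b, x⁆ = (j : 𝕜) • x := by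
  simp [gpq]

lemma mem_Mij {M : Submodule 𝕜 L} {e f x : L} {i j : ℕ} :
    x ∈ Mij 𝕜 L M e f i j ↔
      x ∈ M ∧ (ad 𝕜 L e ^ (i + 1)) x = 0 ∧ (ad 𝕜 L f ^ (j + 1)) x = 0 := by
  simp [Mij, and_assoc]

end Membership

section WonderfulPair

variable {𝕜 L : Type*} [Field 𝕜] [LieRing L] [LieAlgebra 𝕜 L] {e f a b : L}

lemma IsWonderful.exists_preimage (hw : IsWonderful 𝕜 L e f a b) {i j : ℕ} {y : L}
    (hy : y ∈ cent 𝕜 L {e, f} ⊓ gpq 𝕜 L a b i j) :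
    ∃ z ∈ cent 𝕜 L {a, b}, (ad 𝕜 L e ^ (i + 1)) z = 0 ∧ (ad 𝕜 L f ^ (j + 1)) z = 0 ∧
      (ad 𝕜 L e ^ i) ((ad 𝕜 L f ^ j) z) = y := by
  rw [← hw i j] at hy
  obtain ⟨z, hz, rfl⟩ := hy
  exact ⟨z, mem_Mij.mp hz |>.1, mem_Mij.mp hz |>.2.1, mem_Mij.mp hz |>.2.2, rfl⟩

lemma IsWonderful.swap (hef : ⁅e, f⁆ = 0) (hw : IsWonderful 𝕜 L e f a b) :
    IsWonderful 𝕜 L f e b a := by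
  intro i j
  have hM : Mij 𝕜 L (cent 𝕜 L {b, a}) f e i j = Mij 𝕜 L (cent 𝕜 L {a, b}) e f j i := by
    simp only [Mij, Set.pair_comm b a, inf_right_comm]
  rw [← ((commute_ad_of_lie_eq_zero hef).pow_pow j i).eq, hM, hw j i, Set.pair_comm f e, gpq,
    gpq, inf_comm (Module.End.eigenspace _ _)]

lemma ad_pow_apply_mem_cent_inf_gp (hae : ⁅a, e⁆ = e) (hbe : ⁅b, e⁆ = 0) {i : ℕ} {x : L}
    (hx : x ∈ cent 𝕜 L {a, b}) (hxe : (ad 𝕜 L e ^ (i + 1)) x = 0) :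
    (ad 𝕜 L e ^ i) x ∈ cent 𝕜 L {e, b} ⊓ gp 𝕜 L a i := by
  obtain ⟨hxa, hxb⟩ := mem_cent_pair.mp hx
  refine ⟨mem_cent_pair.mpr ⟨?_, ?_⟩, mem_gp_natCast.mpr ?_⟩
  · rwa [← ad_pow_succ_apply]
  · rw [lie_ad_pow_apply_of_lie_eq_zero hbe, hxb, map_zero]
  · simpa using lie_ad_pow_apply_of_lie_eq_self hae (hxa.trans (zero_smul 𝕜 x).symm) i

lemma limE_le_posPart (hae : ⁅a, e⁆ = e) (hbe : ⁅b, e⁆ = 0) :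
    limE 𝕜 L e (cent 𝕜 L {a, b}) ≤ posPart 𝕜 L a (cent 𝕜 L {e, b}) :=
  iSup_mono fun _ ↦ Submodule.map_le_iff_le_comap.mpr fun _ hx ↦
    ad_pow_apply_mem_cent_inf_gp hae hbe hx.1 hx.2

lemma limE_cent_triple_le_posPart (hae : ⁅a, e⁆ = e) (hbe : ⁅b, e⁆ = 0) (hfe : ⁅f, e⁆ = 0) :
    limE 𝕜 L e (cent 𝕜 L {f, a, b}) ≤ posPart 𝕜 L a (cent 𝕜 L {f, e, b}) := by
  refine iSup_mono fun i ↦ Submodule.map_le_iff_le_comap.mpr fun x hx ↦ ?_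
  obtain ⟨hxf, hxa, hxb⟩ := mem_cent_triple.mp hx.1
  obtain ⟨hc, hg⟩ := ad_pow_apply_mem_cent_inf_gp hae hbe (mem_cent_pair.mpr ⟨hxa, hxb⟩) hx.2
  obtain ⟨hce, hcb⟩ := mem_cent_pair.mp hc
  refine ⟨mem_cent_triple.mpr ⟨?_, hce, hcb⟩, hg⟩
  rw [lie_ad_pow_apply_of_lie_eq_zero hfe, hxf, map_zero]

lemma mem_limE_of_ad_pow_apply_eq_zero (hef : ⁅e, f⁆ = 0) (hae : ⁅a, e⁆ = e)
    (haf : ⁅a, f⁆ = 0) (hbe : ⁅b, e⁆ = 0) (hbf : ⁅b, f⁆ = f) (hw : IsWonderful 𝕜 L e f a b)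
    (m : ℕ) {i : ℕ} {y : L} (hy : y ∈ cent 𝕜 L {e, b} ⊓ gp 𝕜 L a i)
    (hym : (ad 𝕜 L f ^ m) y = 0) : y ∈ limE 𝕜 L e (cent 𝕜 L {a, b}) := by
  induction m generalizing y with
  | zero => simp_all
  | succ m ih =>
    obtain ⟨hye, hyb⟩ := mem_cent_pair.mp hy.1
    have hya := mem_gp_natCast.mp hy.2
    have hw_mem : (ad 𝕜 L f ^ m) y ∈ cent 𝕜 L {e, f} ⊓ gpq 𝕜 L a b i m := by
      refine ⟨mem_cent_pair.mpr ⟨?_, ?_⟩, mem_gpq_natCast.mpr ⟨?_, ?_⟩⟩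
      · rw [lie_ad_pow_apply_of_lie_eq_zero hef, hye, map_zero]
      · rw [← ad_pow_succ_apply, hym]
      · rw [lie_ad_pow_apply_of_lie_eq_zero haf, hya, map_smul]
      · simpa using lie_ad_pow_apply_of_lie_eq_self hbf (hyb.trans (zero_smul 𝕜 y).symm) m
    obtain ⟨z, hz, hze, -, hzy⟩ := hw.exists_preimage hw_mem
    have hz_lim : (ad 𝕜 L e ^ i) z ∈ limE 𝕜 L e (cent 𝕜 L {a, b}) :=
      Submodule.mem_iSup_of_mem i (Submodule.mem_map_of_mem ⟨hz, hze⟩)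
    -- subtracting `(ad e)^i z` kills `(ad f)^m y`, which lowers the induction parameter
    have hdiff : y - (ad 𝕜 L e ^ i) z ∈ limE 𝕜 L e (cent 𝕜 L {a, b}) := by
      refine ih (sub_mem hy (ad_pow_apply_mem_cent_inf_gp hae hbe hz hze)) ?_
      rw [map_sub, ← Module.End.mul_apply, ← ((commute_ad_of_lie_eq_zero hef).pow_pow i m).eq,
        Module.End.mul_apply, hzy, sub_self]
    simpa using add_mem hdiff hz_lim

lemma posPart_le_limE [CharZero 𝕜] [Module.Finite 𝕜 L] (hef : ⁅e, f⁆ = 0) (hae : ⁅a, e⁆ = e)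
    (haf : ⁅a, f⁆ = 0) (hbe : ⁅b, e⁆ = 0) (hbf : ⁅b, f⁆ = f) (hw : IsWonderful 𝕜 L e f a b) :
    posPart 𝕜 L a (cent 𝕜 L {e, b}) ≤ limE 𝕜 L e (cent 𝕜 L {a, b}) := by
  refine iSup_le fun i y hy ↦ ?_
  have hyb : ⁅b, y⁆ = (0 : 𝕜) • y := by rw [(mem_cent_pair.mp hy.1).2, zero_smul]
  obtain ⟨m, hm⟩ := exists_ad_pow_apply_eq_zero hbf hyb
  exact mem_limE_of_ad_pow_apply_eq_zero hef hae haf hbe hbf hw m hy hm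

lemma posPart_le_limE_cent_triple (hw : IsWonderful 𝕜 L e f a b) :
    posPart 𝕜 L a (cent 𝕜 L {f, e, b}) ≤ limE 𝕜 L e (cent 𝕜 L {f, a, b}) := by
  refine iSup_le fun i ↦ le_iSup_of_le i fun y hy ↦ ?_
  obtain ⟨hyf, hye, hyb⟩ := mem_cent_triple.mp hy.1
  have hy' : y ∈ cent 𝕜 L {e, f} ⊓ gpq 𝕜 L a b i (0 : ℕ) :=
    ⟨mem_cent_pair.mpr ⟨hye, hyf⟩, mem_gpq_natCast.mpr ⟨mem_gp_natCast.mp hy.2, by simp [hyb]⟩⟩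
  obtain ⟨z, hz, hze, hzf, rfl⟩ := hw.exists_preimage hy'
  obtain ⟨hza, hzb⟩ := mem_cent_pair.mp hz
  exact ⟨z, ⟨mem_cent_triple.mpr ⟨by simpa using hzf, hza, hzb⟩, hze⟩, by simp⟩

theorem limE_cent_eq_posPart [CharZero 𝕜] [Module.Finite 𝕜 L] (hef : ⁅e, f⁆ = 0)
    (hae : ⁅a, e⁆ = e) (haf : ⁅a, f⁆ = 0) (hbe : ⁅b, e⁆ = 0) (hbf : ⁅b, f⁆ = f)
    (hw : IsWonderful 𝕜 L e f a b) :
    limE 𝕜 L e (cent 𝕜 L {a, b}) = posPart 𝕜 L a (cent 𝕜 L {e, b}) :=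
  le_antisymm (limE_le_posPart hae hbe) (posPart_le_limE hef hae haf hbe hbf hw)

theorem limE_cent_triple_eq_posPart (hae : ⁅a, e⁆ = e) (hbe : ⁅b, e⁆ = 0) (hfe : ⁅f, e⁆ = 0)
    (hw : IsWonderful 𝕜 L e f a b) :
    limE 𝕜 L e (cent 𝕜 L {f, a, b}) = posPart 𝕜 L a (cent 𝕜 L {f, e, b}) :=
  le_antisymm (limE_cent_triple_le_posPart hae hbe hfe) (posPart_le_limE_cent_triple hw)

end WonderfulPair

section Statement6

variable (𝕜 : Type*) [Field 𝕜] [IsAlgClosed 𝕜] [CharZero 𝕜]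
variable (L : Type*) [LieRing L] [LieAlgebra 𝕜 L] [Module.Finite 𝕜 L]
  [LieAlgebra.IsSemisimple 𝕜 L]

/-- Proposition 2.4. For a wonderful pair:
(1) `lim_{e₁} 𝔥 = 𝔷_𝔤(e₁,h₂)_ℙ` and `lim_{e₂} 𝔥 = 𝔷_𝔤(e₂,h₁)_ℙ`;
(2) `lim_{e₁} 𝔷_𝔤(e₂,h₁,h₂) = 𝔷_𝔤(e₂,e₁,h₂)_ℙ` and
    `lim_{e₂} 𝔷_𝔤(e₁,h₁,h₂) = 𝔷_𝔤(e₁,e₂,h₁)_ℙ`. -/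
theorem statement6 (e₁ e₂ h₁ h₂ : L)
    (hnp : IsNilpotentPair 𝕜 L e₁ e₂) (hch : IsCharacteristic 𝕜 L e₁ e₂ h₁ h₂)
    (hw : IsWonderful 𝕜 L e₁ e₂ h₁ h₂) :
    (limE 𝕜 L e₁ (cent 𝕜 L {h₁, h₂}) = posPart 𝕜 L h₁ (cent 𝕜 L {e₁, h₂}) ∧
     limE 𝕜 L e₂ (cent 𝕜 L {h₁, h₂}) = posPart 𝕜 L h₂ (cent 𝕜 L {e₂, h₁})) ∧
    (limE 𝕜 L e₁ (cent 𝕜 L {e₂, h₁, h₂}) = posPart 𝕜 L h₁ (cent 𝕜 L {e₂, e₁, h₂}) ∧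
     limE 𝕜 L e₂ (cent 𝕜 L {e₁, h₁, h₂}) = posPart 𝕜 L h₂ (cent 𝕜 L {e₁, e₂, h₁})) := by
  obtain ⟨hef, -⟩ := hnp
  obtain ⟨-, -, -, h11, h22, h12, h21, -⟩ := hch
  have hfe : ⁅e₂, e₁⁆ = 0 := by rw [← lie_skew, hef, neg_zero]
  have hw' := hw.swap hef
  have part₁ := limE_cent_eq_posPart hfe h22 h21 h12 h11 hw'
  have part₂ := limE_cent_triple_eq_posPart h22 h12 hef hw'
  rw [Set.pair_comm h₂ h₁] at part₁ part₂
  exact ⟨⟨limE_cent_eq_posPart hef h11 h12 h21 h22 hw, part₁⟩,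
    limE_cent_triple_eq_posPart h11 h21 hfe hw, part₂⟩

end Statement6
end

section
/- Let 𝐞 = (e₁,e₂) be a rectangular nilpotent pair in 𝔤 (so there exist commuting sl₂-triples {e₁,2h₁,f₁} and {e₂,2h₂,f₂} where 𝐡 = (h₁,h₂) is a characteristic of 𝐞). Then 𝐞 is even, i.e. dim 𝔷_𝔤(𝐞) = dim 𝔷_𝔤(𝐡), if and only if both e₁ and e₂ are even nilpotent elements of 𝔤. -/
/-!
Let `(e, h, f)` be an `sl₂`-triple acting on a finite-dimensional module `V` with `h` semisimple.
Vectors killed by `e` have weights in `ℕ`, and for `n ∈ ℕ` the map `e` sends `V_n` onto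
`V_{n+2}`; hence `dim ker e = dim V₀ + dim V₁`. For a rectangular pair the triples
`(e₁, 2h₁, f₁)` and `(e₂, 2h₂, f₂)` commute, so applying this to the second triple on
`ker (ad e₁)` and then to the first on the eigenspaces of `ad 2h₂` gives
`dim 𝔷(𝐞) = ∑_{a, b ∈ {0, 1}} dim 𝔤_{a,b}`, where `𝔤_{a,b}` is the joint `(a, b)`-eigenspace of
`(ad 2h₁, ad 2h₂)` and `𝔷(𝐡) = 𝔤_{0,0}`. Thus `𝐞` is even iff `𝔤_{1,0} = 𝔤_{0,1} = 𝔤_{1,1} = 0`.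
A module of `sl₂` with an odd weight has the weight `1`, so this holds iff `1` is not an
eigenvalue of `ad 2h₁` nor of `ad 2h₂`, i.e. iff `e₁` and `e₂` are even.
-/

open LieAlgebra Module Submodule

section Sl2Defs

variable (𝕜 : Type*) [Field 𝕜] [IsAlgClosed 𝕜] [CharZero 𝕜]
variable (L : Type*) [LieRing L] [LieAlgebra 𝕜 L]

/-- Commuting `sl₂`-triples `{e₁, 2h₁, f₁}` and `{e₂, 2h₂, f₂}` (note `[hᵢ,eᵢ] = eᵢ`
is part of the characteristic, so only the remaining relations are recorded). -/
def CommutingSl2Triples (e₁ e₂ h₁ h₂ f₁ f₂ : L) : Prop :=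
  ⁅h₁, f₁⁆ = -f₁ ∧ ⁅e₁, f₁⁆ = (2 : 𝕜) • h₁ ∧
  ⁅h₂, f₂⁆ = -f₂ ∧ ⁅e₂, f₂⁆ = (2 : 𝕜) • h₂ ∧
  ⁅e₁, f₂⁆ = 0 ∧ ⁅f₁, e₂⁆ = 0 ∧ ⁅f₁, f₂⁆ = 0 ∧ ⁅h₁, f₂⁆ = 0 ∧ ⁅h₂, f₁⁆ = 0

end Sl2Defs

open LieModule

lemma iSupIndep.finrank_iSup_nat_eq_add {K V : Type*} [DivisionRing K] [AddCommGroup V]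
    [Module K V] [FiniteDimensional K V] {t : ℕ → Submodule K V} (ht : iSupIndep t) :
    finrank K ↥(⨆ n, t n) = finrank K ↥(t 0) + finrank K ↥(⨆ n, t (n + 1)) := by
  have hdisj : Disjoint (t 0) (⨆ n, t (n + 1)) :=
    (ht 0).mono_right (iSup_le fun n ↦ le_iSup₂_of_le (n + 1) n.succ_ne_zero le_rfl)
  rw [← sup_iSup_nat_succ, ← Submodule.finrank_sup_add_finrank_inf_eq, hdisj.eq_bot, finrank_bot,
    add_zero]

section Sl2Modules

variable {K L M : Type*} [Field K] [LieRing L] [LieAlgebra K L]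
  [AddCommGroup M] [Module K M] [LieRingModule L M] [LieModule K L M]

lemma IsSl2Triple.HasPrimitiveVectorWith.pow_toEnd_e_pow_toEnd_f {h e f : L}
    {t : IsSl2Triple h e f} {m : M} {μ : K} (P : t.HasPrimitiveVectorWith m μ) (j : ℕ) :
    (toEnd K L M e ^ j) ((toEnd K L M f ^ j) m) =
      (∏ i ∈ Finset.range j, ((i + 1) * (μ - i))) • m := by
  induction j with
  | zero => simp
  | succ j ih =>
    rw [pow_succ, End.mul_apply, toEnd_apply_apply, P.lie_e_pow_succ_toEnd_f, map_smul, ih,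
      smul_smul, Finset.prod_range_succ, mul_comm]

lemma lie_mem_eigenspace_of_lie_eq_zero {x y : L} (hxy : ⁅x, y⁆ = 0) {μ : K} {m : M}
    (hm : m ∈ (toEnd K L M x).eigenspace μ) : ⁅y, m⁆ ∈ (toEnd K L M x).eigenspace μ := by
  rw [End.mem_eigenspace_iff, toEnd_apply_apply] at hm ⊢
  rw [leibniz_lie, hxy, zero_lie, zero_add, hm, lie_smul]

lemma lie_mem_ker_of_lie_eq_zero {x y : L} (hxy : ⁅x, y⁆ = 0) {m : M}
    (hm : m ∈ LinearMap.ker (toEnd K L M x)) : ⁅y, m⁆ ∈ LinearMap.ker (toEnd K L M x) := by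
  rw [← End.eigenspace_zero] at hm ⊢
  exact lie_mem_eigenspace_of_lie_eq_zero hxy hm

/-- The relations of `IsSl2Triple` without `h ≠ 0`: a characteristic may have `h₁ = 0`,
in which case `e₁ = f₁ = 0`. -/
structure IsWeakSl2Triple (h e f : L) : Prop where
  lie_e_f : ⁅e, f⁆ = h
  lie_h_e_nsmul : ⁅h, e⁆ = 2 • e
  lie_h_f_nsmul : ⁅h, f⁆ = -(2 • f)

namespace IsWeakSl2Triple

variable {h e f : L} {m : M} {μ : K} {p : Submodule K M}

lemma isSl2Triple_of_mem_eigenspace (t : IsWeakSl2Triple h e f)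
    (hm : m ∈ (toEnd K L M h).eigenspace μ) (hm₀ : m ≠ 0) (hμ : μ ≠ 0) :
    IsSl2Triple h e f where
  h_ne_zero := by
    rintro rfl
    rw [End.mem_eigenspace_iff, map_zero, LinearMap.zero_apply, eq_comm, smul_eq_zero] at hm
    tauto
  lie_e_f := t.lie_e_f
  lie_h_e_nsmul := t.lie_h_e_nsmul
  lie_h_f_nsmul := t.lie_h_f_nsmul

lemma lie_e_mem_eigenspace (t : IsWeakSl2Triple h e f)
    (hm : m ∈ (toEnd K L M h).eigenspace μ) :
    ⁅e, m⁆ ∈ (toEnd K L M h).eigenspace (μ + 2) := by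
  rw [End.mem_eigenspace_iff, toEnd_apply_apply] at hm ⊢
  rw [leibniz_lie, t.lie_h_e_nsmul, hm, nsmul_lie, lie_smul]
  module

lemma pow_toEnd_e_mem_eigenspace (t : IsWeakSl2Triple h e f)
    (hm : m ∈ (toEnd K L M h).eigenspace μ) (k : ℕ) :
    (toEnd K L M e ^ k) m ∈ (toEnd K L M h).eigenspace (μ + 2 * k) := by
  induction k with
  | zero => simpa using hm
  | succ k ih =>
    rw [pow_succ', End.mul_apply, toEnd_apply_apply, Nat.cast_succ, mul_add_one, ← add_assoc]
    exact t.lie_e_mem_eigenspace ih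

omit [LieAlgebra K L] [LieModule K L M] in
lemma lie_h_mem (t : IsWeakSl2Triple h e f) (hpe : ∀ m ∈ p, ⁅e, m⁆ ∈ p)
    (hpf : ∀ m ∈ p, ⁅f, m⁆ ∈ p) (hm : m ∈ p) : ⁅h, m⁆ ∈ p := by
  rw [← t.lie_e_f, lie_lie]
  exact sub_mem (hpe _ (hpf _ hm)) (hpf _ (hpe _ hm))

lemma lie_h_mem_ker (t : IsWeakSl2Triple h e f) (hm : m ∈ LinearMap.ker (toEnd K L M e)) :
    ⁅h, m⁆ ∈ LinearMap.ker (toEnd K L M e) := by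
  rw [LinearMap.mem_ker, toEnd_apply_apply] at hm ⊢
  rw [leibniz_lie, hm, lie_zero, add_zero, ← lie_skew, t.lie_h_e_nsmul, neg_lie, nsmul_lie, hm,
    smul_zero, neg_zero]

variable [CharZero K]

lemma mem_map_pow_of_lie_e_eq_zero (t : IsWeakSl2Triple h e f) (hpf : ∀ m ∈ p, ⁅f, m⁆ ∈ p)
    {n k : ℕ} {u : M} (hu : u ∈ (toEnd K L M h).eigenspace (n + 2 * (k + 1)) ⊓ p)
    (heu : ⁅e, u⁆ = 0) :
    u ∈ ((toEnd K L M h).eigenspace n ⊓ p).map (toEnd K L M e ^ (k + 1)) := by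
  rcases eq_or_ne u 0 with rfl | hu₀
  · exact zero_mem _
  set μ : K := n + 2 * (k + 1) with hμ
  have hμ' : μ = ((n + 2 * (k + 1) : ℕ) : K) := by push_cast; rfl
  have t' := t.isSl2Triple_of_mem_eigenspace hu.1 hu₀ <| by
    rw [hμ']
    exact Nat.cast_ne_zero.mpr (by omega)
  have P : t'.HasPrimitiveVectorWith u μ := ⟨hu₀, by simpa using hu.1, heu⟩
  set c := ∏ i ∈ Finset.range (k + 1), ((i + 1) * (μ - i))
  have hc : c ≠ 0 := Finset.prod_ne_zero_iff.mpr fun i hi ↦ by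
    have := Finset.mem_range.mp hi
    refine mul_ne_zero (Nat.cast_add_one_ne_zero i) ?_
    rw [hμ', sub_ne_zero, Ne, Nat.cast_inj]
    omega
  refine ⟨c⁻¹ • (toEnd K L M f ^ (k + 1)) u,
    ⟨Submodule.smul_mem _ _ ?_, Submodule.smul_mem _ _ ?_⟩, ?_⟩
  · rw [End.mem_eigenspace_iff, toEnd_apply_apply, P.lie_h_pow_toEnd_f, hμ]
    push_cast
    ring_nf
  · exact End.pow_apply_mem_of_forall_mem _ hpf _ hu.2
  · rw [map_smul, P.pow_toEnd_e_pow_toEnd_f, smul_smul, inv_mul_cancel₀ hc, one_smul]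

variable [FiniteDimensional K M]

lemma exists_pow_toEnd_e_eq_zero (t : IsWeakSl2Triple h e f)
    (hm : m ∈ (toEnd K L M h).eigenspace μ) :
    ∃ k : ℕ, (toEnd K L M e ^ k) m = 0 := by
  by_contra! hne
  refine (toEnd K L M h).finite_hasEigenvalue.not_infinite <|
    Set.infinite_of_injective_forall_mem (f := fun k : ℕ ↦ μ + 2 * k) (fun a b hab ↦ ?_)
      fun k ↦ End.hasEigenvalue_of_hasEigenvector ⟨t.pow_toEnd_e_mem_eigenspace hm k, hne k⟩
  simpa using hab

lemma exists_nat_of_lie_e_eq_zero (t : IsWeakSl2Triple h e f)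
    (hm : m ∈ (toEnd K L M h).eigenspace μ) (hm₀ : m ≠ 0) (hem : ⁅e, m⁆ = 0) :
    ∃ n : ℕ, μ = n := by
  rcases eq_or_ne μ 0 with rfl | hμ
  · exact ⟨0, Nat.cast_zero.symm⟩
  have t' := t.isSl2Triple_of_mem_eigenspace hm hm₀ hμ
  exact IsSl2Triple.HasPrimitiveVectorWith.exists_nat (t := t') ⟨hm₀, by simpa using hm, hem⟩

lemma eigenspace_add_two_inf_le_map (t : IsWeakSl2Triple h e f)
    (hpe : ∀ m ∈ p, ⁅e, m⁆ ∈ p) (hpf : ∀ m ∈ p, ⁅f, m⁆ ∈ p) (n : ℕ) :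
    (toEnd K L M h).eigenspace (n + 2) ⊓ p ≤
      ((toEnd K L M h).eigenspace n ⊓ p).map (toEnd K L M e) := by
  intro w hw
  obtain ⟨k, hk⟩ := t.exists_pow_toEnd_e_eq_zero hw.1
  -- Induction on `k`: subtract from `w` a preimage of the primitive vector `e ^ k w`.
  induction k generalizing w with
  | zero => simp_all
  | succ k ih =>
    have hu : (toEnd K L M e ^ k) w ∈ (toEnd K L M h).eigenspace (n + 2 * (k + 1)) ⊓ p := by
      refine ⟨?_, End.pow_apply_mem_of_forall_mem _ hpe _ hw.2⟩
      have := t.pow_toEnd_e_mem_eigenspace hw.1 k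
      rwa [show (n : K) + 2 + 2 * k = n + 2 * (k + 1) by ring] at this
    obtain ⟨x, hx, hxu⟩ := t.mem_map_pow_of_lie_e_eq_zero hpf hu
      (by rwa [← toEnd_apply_apply K, ← End.mul_apply, ← pow_succ'])
    have hex : ⁅e, x⁆ ∈ (toEnd K L M h).eigenspace (n + 2) ⊓ p :=
      ⟨t.lie_e_mem_eigenspace hx.1, hpe _ hx.2⟩
    have hrest := ih (sub_mem hw hex) <| by
      rw [map_sub, ← toEnd_apply_apply K, ← End.mul_apply, ← pow_succ, hxu, sub_self]
    simpa using add_mem hrest ⟨x, hx, rfl⟩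

lemma map_eigenspace_inf (t : IsWeakSl2Triple h e f)
    (hpe : ∀ m ∈ p, ⁅e, m⁆ ∈ p) (hpf : ∀ m ∈ p, ⁅f, m⁆ ∈ p) (n : ℕ) :
    ((toEnd K L M h).eigenspace n ⊓ p).map (toEnd K L M e) =
      (toEnd K L M h).eigenspace (n + 2 : ℕ) ⊓ p := by
  refine le_antisymm (Submodule.map_le_iff_le_comap.mpr fun x hx ↦ ?_) ?_
  · exact ⟨by simpa using t.lie_e_mem_eigenspace hx.1, hpe _ hx.2⟩
  · simpa using t.eigenspace_add_two_inf_le_map hpe hpf n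

lemma exists_int_eigenspace_emod_two_inf_ne_bot (t : IsWeakSl2Triple h e f)
    (hpe : ∀ m ∈ p, ⁅e, m⁆ ∈ p) (hpf : ∀ m ∈ p, ⁅f, m⁆ ∈ p)
    (hμ : (toEnd K L M h).eigenspace μ ⊓ p ≠ ⊥) :
    ∃ n : ℤ, μ = n ∧ (toEnd K L M h).eigenspace ((n % 2 : ℤ) : K) ⊓ p ≠ ⊥ := by
  obtain ⟨m, hm, hm₀⟩ := Submodule.exists_mem_ne_zero_of_ne_bot hμ
  rcases eq_or_ne μ 0 with rfl | hμ₀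
  · exact ⟨0, by simp, by simpa using hμ⟩
  have t' := t.isSl2Triple_of_mem_eigenspace hm.1 hm₀ hμ₀
  -- Raise `m` to a primitive vector `u` of weight `N : ℕ`, then lower `u` to weight `N % 2`.
  obtain ⟨k, hu₀, hk⟩ := Nat.exists_not_and_succ_of_not_zero_of_exists (by simpa using hm₀)
    (t.exists_pow_toEnd_e_eq_zero hm.1)
  set u := (toEnd K L M e ^ k) m
  have hu := t.pow_toEnd_e_mem_eigenspace hm.1 k
  have heu : ⁅e, u⁆ = 0 := by rwa [pow_succ', End.mul_apply] at hk
  obtain ⟨N, hN⟩ := t.exists_nat_of_lie_e_eq_zero hu hu₀ heu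
  have P : t'.HasPrimitiveVectorWith u (N : K) := ⟨hu₀, by simpa [hN] using hu, heu⟩
  refine ⟨N - 2 * k, by push_cast; linear_combination hN, Submodule.ne_bot_iff _ |>.mpr
    ⟨(toEnd K L M f ^ (N / 2)) u, Submodule.mem_inf.mpr ⟨?_, End.pow_apply_mem_of_forall_mem _
      hpf _ (End.pow_apply_mem_of_forall_mem _ hpe _ hm.2)⟩,
      P.pow_toEnd_f_ne_zero_of_eq_nat rfl (Nat.div_le_self N 2)⟩⟩
  have hmod : ((N - 2 * k : ℤ) % 2 : ℤ) = ((N % 2 : ℕ) : ℤ) := by omega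
  have hdiv := congrArg (Nat.cast (R := K)) (Nat.div_add_mod N 2)
  push_cast at hdiv
  rw [End.mem_eigenspace_iff, toEnd_apply_apply, P.lie_h_pow_toEnd_f, hmod, Int.cast_natCast]
  congr 1
  linear_combination -hdiv

lemma eigenspace_one_eq_bot_iff (t : IsWeakSl2Triple h e f) :
    (toEnd K L M h).eigenspace 1 = ⊥ ↔
      ∀ μ : K, (toEnd K L M h).HasEigenvalue μ → ∃ n : ℤ, μ = ((2 * n : ℤ) : K) := by
  constructor
  · intro h₁ μ hμ
    obtain ⟨n, rfl, hn⟩ := t.exists_int_eigenspace_emod_two_inf_ne_bot (p := ⊤)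
      (fun _ _ ↦ trivial) (fun _ _ ↦ trivial) (by simpa using End.hasEigenvalue_iff.mp hμ)
    rcases Int.emod_two_eq_zero_or_one n with hn₂ | hn₂
    · exact ⟨n / 2, by congr 1; omega⟩
    · simp [hn₂, h₁] at hn
  · intro hev
    by_contra hne
    obtain ⟨n, hn⟩ := hev 1 (End.hasEigenvalue_iff.mpr hne)
    have : (1 : ℤ) = 2 * n := by exact_mod_cast hn
    omega

variable [IsAlgClosed K]

lemma inf_ker_le_iSup (t : IsWeakSl2Triple h e f) (hs : (toEnd K L M h).IsSemisimple)
    (hpe : ∀ m ∈ p, ⁅e, m⁆ ∈ p) (hpf : ∀ m ∈ p, ⁅f, m⁆ ∈ p) :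
    p ⊓ LinearMap.ker (toEnd K L M e) ≤ ⨆ n : ℕ, (toEnd K L M h).eigenspace n ⊓ p := by
  have hinv : ∀ m ∈ p ⊓ LinearMap.ker (toEnd K L M e),
      toEnd K L M h m ∈ p ⊓ LinearMap.ker (toEnd K L M e) :=
    fun m hm ↦ ⟨t.lie_h_mem hpe hpf hm.1, t.lie_h_mem_ker hm.2⟩
  rw [Submodule.eq_iSup_inf_genEigenspace 1 hinv hs.iSup_eigenspace_eq_top]
  refine iSup_le fun μ m hm ↦ ?_
  rcases eq_or_ne m 0 with rfl | hm₀
  · exact zero_mem _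
  obtain ⟨n, rfl⟩ := t.exists_nat_of_lie_e_eq_zero hm.2 hm₀ hm.1.2
  exact Submodule.mem_iSup_of_mem n ⟨hm.2, hm.1.1⟩

/-- Rank–nullity for `e` on `⨁_{n ∈ ℕ} V_n ⊓ p`, which `e` maps onto `⨁_{n ∈ ℕ} V_{n+2} ⊓ p`
with kernel `p ⊓ ker e`. -/
theorem finrank_inf_ker (t : IsWeakSl2Triple h e f) (hs : (toEnd K L M h).IsSemisimple)
    (hpe : ∀ m ∈ p, ⁅e, m⁆ ∈ p) (hpf : ∀ m ∈ p, ⁅f, m⁆ ∈ p) :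
    finrank K ↥(p ⊓ LinearMap.ker (toEnd K L M e)) =
      finrank K ↥((toEnd K L M h).eigenspace 0 ⊓ p) +
        finrank K ↥((toEnd K L M h).eigenspace 1 ⊓ p) := by
  set q : ℕ → Submodule K M := fun n ↦ (toEnd K L M h).eigenspace n ⊓ p
  have hind : iSupIndep q :=
    ((toEnd K L M h).eigenspaces_iSupIndep.comp Nat.cast_injective).mono fun n ↦ inf_le_left
  have hsplit : finrank K ↥(⨆ n, q n) =
      finrank K ↥(q 0) + (finrank K ↥(q 1) + finrank K ↥(⨆ n, q (n + 2))) := by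
    rw [hind.finrank_iSup_nat_eq_add]
    exact congrArg _ (hind.comp (add_left_injective 1)).finrank_iSup_nat_eq_add
  have hker : p ⊓ LinearMap.ker (toEnd K L M e) = (⨆ n, q n) ⊓ LinearMap.ker (toEnd K L M e) :=
    le_antisymm (le_inf (t.inf_ker_le_iSup hs hpe hpf) inf_le_right)
      (inf_le_inf_right _ (iSup_le fun n ↦ inf_le_right))
  have hrange : (⨆ n, q n).map (toEnd K L M e) = ⨆ n, q (n + 2) := by
    rw [Submodule.map_iSup]
    exact iSup_congr fun n ↦ t.map_eigenspace_inf hpe hpf n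
  have hrank := LinearMap.finrank_range_add_finrank_ker ((toEnd K L M e).domRestrict (⨆ n, q n))
  rw [LinearMap.range_domRestrict, hrange, LinearMap.ker_domRestrict,
    ← Submodule.finrank_map_subtype_eq, Submodule.map_comap_subtype, hsplit] at hrank
  have hq₀ : q 0 = (toEnd K L M h).eigenspace 0 ⊓ p := by simp [q]
  have hq₁ : q 1 = (toEnd K L M h).eigenspace 1 ⊓ p := by simp [q]
  rw [hker, ← hq₀, ← hq₁]
  omega

lemma eq_bot_of_eigenspace_inf_eq_bot (t : IsWeakSl2Triple h e f)
    (hs : (toEnd K L M h).IsSemisimple) (hpe : ∀ m ∈ p, ⁅e, m⁆ ∈ p) (hpf : ∀ m ∈ p, ⁅f, m⁆ ∈ p)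
    (h₀ : (toEnd K L M h).eigenspace 0 ⊓ p = ⊥) (h₁ : (toEnd K L M h).eigenspace 1 ⊓ p = ⊥) :
    p = ⊥ := by
  rw [Submodule.eq_iSup_inf_genEigenspace 1 (fun m hm ↦ t.lie_h_mem hpe hpf hm)
    hs.iSup_eigenspace_eq_top, iSup_eq_bot]
  intro μ
  by_contra hμ
  obtain ⟨n, -, hn⟩ := t.exists_int_eigenspace_emod_two_inf_ne_bot hpe hpf (by rwa [inf_comm])
  rcases Int.emod_two_eq_zero_or_one n with hn₂ | hn₂
  · rw [hn₂, Int.cast_zero] at hn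
    exact hn h₀
  · rw [hn₂, Int.cast_one] at hn
    exact hn h₁

end IsWeakSl2Triple

namespace IsWeakSl2Triple

variable [CharZero K] [IsAlgClosed K] [FiniteDimensional K M] {h₁ e₁ f₁ h₂ e₂ f₂ : L}

theorem finrank_ker_inf_ker (t₁ : IsWeakSl2Triple h₁ e₁ f₁) (t₂ : IsWeakSl2Triple h₂ e₂ f₂)
    (hs₁ : (toEnd K L M h₁).IsSemisimple) (hs₂ : (toEnd K L M h₂).IsSemisimple)
    (he₁e₂ : ⁅e₁, e₂⁆ = 0) (he₁f₂ : ⁅e₁, f₂⁆ = 0) (hh₂e₁ : ⁅h₂, e₁⁆ = 0) (hh₂f₁ : ⁅h₂, f₁⁆ = 0) :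
    finrank K ↥(LinearMap.ker (toEnd K L M e₁) ⊓ LinearMap.ker (toEnd K L M e₂)) =
      finrank K ↥((toEnd K L M h₁).eigenspace 0 ⊓ (toEnd K L M h₂).eigenspace 0) +
      finrank K ↥((toEnd K L M h₁).eigenspace 1 ⊓ (toEnd K L M h₂).eigenspace 0) +
      (finrank K ↥((toEnd K L M h₁).eigenspace 0 ⊓ (toEnd K L M h₂).eigenspace 1) +
      finrank K ↥((toEnd K L M h₁).eigenspace 1 ⊓ (toEnd K L M h₂).eigenspace 1)) := by
  have hV (a : K) := t₁.finrank_inf_ker hs₁ (p := (toEnd K L M h₂).eigenspace a)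
    (fun _ ↦ lie_mem_eigenspace_of_lie_eq_zero hh₂e₁)
    (fun _ ↦ lie_mem_eigenspace_of_lie_eq_zero hh₂f₁)
  rw [t₂.finrank_inf_ker hs₂ (fun _ ↦ lie_mem_ker_of_lie_eq_zero he₁e₂)
    (fun _ ↦ lie_mem_ker_of_lie_eq_zero he₁f₂), inf_comm, ← hV, inf_comm, ← hV]

theorem finrank_ker_inf_ker_eq_iff (t₁ : IsWeakSl2Triple h₁ e₁ f₁)
    (t₂ : IsWeakSl2Triple h₂ e₂ f₂)
    (hs₁ : (toEnd K L M h₁).IsSemisimple) (hs₂ : (toEnd K L M h₂).IsSemisimple)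
    (he₁e₂ : ⁅e₁, e₂⁆ = 0) (he₁f₂ : ⁅e₁, f₂⁆ = 0) (hh₂e₁ : ⁅h₂, e₁⁆ = 0) (hh₂f₁ : ⁅h₂, f₁⁆ = 0)
    (hh₁e₂ : ⁅h₁, e₂⁆ = 0) (hh₁f₂ : ⁅h₁, f₂⁆ = 0) :
    finrank K ↥(LinearMap.ker (toEnd K L M e₁) ⊓ LinearMap.ker (toEnd K L M e₂)) =
        finrank K ↥((toEnd K L M h₁).eigenspace 0 ⊓ (toEnd K L M h₂).eigenspace 0) ↔
      (toEnd K L M h₁).eigenspace 1 = ⊥ ∧ (toEnd K L M h₂).eigenspace 1 = ⊥ := by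
  rw [t₁.finrank_ker_inf_ker t₂ hs₁ hs₂ he₁e₂ he₁f₂ hh₂e₁ hh₂f₁]
  refine ⟨fun heq ↦ ⟨?_, ?_⟩, ?_⟩
  · refine t₂.eq_bot_of_eigenspace_inf_eq_bot hs₂ (fun _ ↦ lie_mem_eigenspace_of_lie_eq_zero hh₁e₂)
      (fun _ ↦ lie_mem_eigenspace_of_lie_eq_zero hh₁f₂) ?_ ?_ <;>
    rw [inf_comm, ← Submodule.finrank_eq_zero] <;> omega
  · refine t₁.eq_bot_of_eigenspace_inf_eq_bot hs₁ (fun _ ↦ lie_mem_eigenspace_of_lie_eq_zero hh₂e₁)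
      (fun _ ↦ lie_mem_eigenspace_of_lie_eq_zero hh₂f₁) ?_ ?_ <;>
    rw [← Submodule.finrank_eq_zero] <;> omega
  · rintro ⟨hV₁, hV₂⟩
    rw [hV₁, hV₂, bot_inf_eq, inf_bot_eq, inf_bot_eq, finrank_bot]
    omega

end IsWeakSl2Triple

end Sl2Modules

section Characteristics

variable {𝕜 L : Type*} [Field 𝕜] [LieRing L] [LieAlgebra 𝕜 L]

lemma cent_pair_eq_ker_inf_ker (x y : L) :
    cent 𝕜 L {x, y} = LinearMap.ker (ad 𝕜 L x) ⊓ LinearMap.ker (ad 𝕜 L y) := by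
  ext z
  simp [cent]

lemma eigenspace_zero_ad_two_smul [CharZero 𝕜] (x : L) :
    (ad 𝕜 L ((2 : 𝕜) • x)).eigenspace 0 = LinearMap.ker (ad 𝕜 L x) := by
  rw [End.eigenspace_zero, map_smul, LinearMap.ker_smul _ _ two_ne_zero]

lemma isSemisimple_ad_smul (c : 𝕜) {x : L} (hx : (ad 𝕜 L x).IsSemisimple) :
    (ad 𝕜 L (c • x)).IsSemisimple := by
  rw [map_smul]
  exact End.IsSemisimple_smul c hx

lemma isWeakSl2Triple_two_smul {h e f : L} (he : ⁅h, e⁆ = e) (hf : ⁅h, f⁆ = -f)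
    (hef : ⁅e, f⁆ = (2 : 𝕜) • h) : IsWeakSl2Triple ((2 : 𝕜) • h) e f where
  lie_e_f := hef
  lie_h_e_nsmul := by rw [smul_lie, he, two_smul, two_nsmul]
  lie_h_f_nsmul := by rw [smul_lie, hf, smul_neg, two_smul, two_nsmul]

end Characteristics

section Statement14

variable (𝕜 : Type*) [Field 𝕜] [IsAlgClosed 𝕜] [CharZero 𝕜]
variable (L : Type*) [LieRing L] [LieAlgebra 𝕜 L] [Module.Finite 𝕜 L]
  [LieAlgebra.IsSemisimple 𝕜 L]

/-- A nilpotent element `e` belonging to an `sl₂`-triple with semisimple member `h̃` is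
even if all eigenvalues of `ad h̃` on `𝔤` are even integers. -/
def IsEvenNilpotentFor (htilde : L) : Prop :=
  ∀ μ : 𝕜, (ad 𝕜 L htilde).HasEigenvalue μ → ∃ m : ℤ, μ = ((2 * m : ℤ) : 𝕜)

/-- Proposition 3.1. A rectangular nilpotent pair `(e₁,e₂)` (with
commuting `sl₂`-triples `{e₁,2h₁,f₁}`, `{e₂,2h₂,f₂}`, `(h₁,h₂)` a characteristic) is even
(`dim 𝔷_𝔤(𝐞) = dim 𝔷_𝔤(𝐡)`) iff both `e₁` and `e₂` are even nilpotent elements. -/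
theorem statement14 (e₁ e₂ h₁ h₂ f₁ f₂ : L)
    (hnp : IsNilpotentPair 𝕜 L e₁ e₂) (hch : IsCharacteristic 𝕜 L e₁ e₂ h₁ h₂)
    (hrect : CommutingSl2Triples 𝕜 L e₁ e₂ h₁ h₂ f₁ f₂) :
    Module.finrank 𝕜 (cent 𝕜 L {e₁, e₂}) = Module.finrank 𝕜 (cent 𝕜 L {h₁, h₂}) ↔
      (IsEvenNilpotentFor 𝕜 L ((2 : 𝕜) • h₁) ∧ IsEvenNilpotentFor 𝕜 L ((2 : 𝕜) • h₂)) := by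
  obtain ⟨he₁e₂, -⟩ := hnp
  obtain ⟨hs₁, hs₂, -, hh₁e₁, hh₂e₂, hh₁e₂, hh₂e₁, -⟩ := hch
  obtain ⟨hh₁f₁, he₁f₁, hh₂f₂, he₂f₂, he₁f₂, -, -, hh₁f₂, hh₂f₁⟩ := hrect
  have t₁ := isWeakSl2Triple_two_smul hh₁e₁ hh₁f₁ he₁f₁
  have t₂ := isWeakSl2Triple_two_smul hh₂e₂ hh₂f₂ he₂f₂
  have key := t₁.finrank_ker_inf_ker_eq_iff (M := L) t₂ (isSemisimple_ad_smul 2 hs₁)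
    (isSemisimple_ad_smul 2 hs₂) he₁e₂ he₁f₂ (by simp [hh₂e₁]) (by simp [hh₂f₁])
    (by simp [hh₁e₂]) (by simp [hh₁f₂])
  rw [t₁.eigenspace_one_eq_bot_iff, t₂.eigenspace_one_eq_bot_iff] at key
  rw [cent_pair_eq_ker_inf_ker, cent_pair_eq_ker_inf_ker, ← eigenspace_zero_ad_two_smul h₁,
    ← eigenspace_zero_ad_two_smul h₂]
  exact key

end Statement14
end
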